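/- arXiv:1705.03296 — 2 statements merged into one kernel-verified Lean document; each statement's English description precedes it below -/
import Mathlib

section
/- Let 𝒢 = (V, ω) be a connected finite weighted graph with at least two vertices and all degrees positive. Let A be the Markov operator of 𝒢, and let μ₂ = sup { Re⟨Af, f⟩_ν / ⟨f, f⟩_ν : f : V → ℂ, f ≠ 0, ∑_s ν(s) f(s) = 0 }, where ⟨f, g⟩_ν = ∑_s ν(s) f(s) conj(g(s)). Then μ₂ < 1 and π_{2,𝒢}(ℂ) = 1/√(2 − 2μ₂). -/
open scoped BigOperators
open Finset MeasureTheory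

noncomputable section

variable {V : Type*}

def wdeg [Fintype V] (ω : V → V → ℝ) (s : V) : ℝ := ∑ t, ω s t

def nu [Fintype V] (ω : V → V → ℝ) (s : V) : ℝ := wdeg ω s / ∑ t, wdeg ω t

def edgeP [Fintype V] (ω : V → V → ℝ) (s t : V) : ℝ := ω s t / ∑ u, ∑ v, ω u v

def SymmW (ω : V → V → ℝ) : Prop := ∀ s t, ω s t = ω t s

def NonnegW (ω : V → V → ℝ) : Prop := ∀ s t, 0 ≤ ω s t

def ConnW (ω : V → V → ℝ) : Prop := (SimpleGraph.fromRel fun s t => 0 < ω s t).Connected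

def lpNormW [Fintype V] (ω : V → V → ℝ) (p : ℝ) {X : Type*} [NormedAddCommGroup X]
    (f : V → X) : ℝ := (∑ s, nu ω s * ‖f s‖ ^ p) ^ (1 / p)

def gradNormW [Fintype V] (ω : V → V → ℝ) (p : ℝ) {X : Type*} [NormedAddCommGroup X]
    (f : V → X) : ℝ := (∑ s, ∑ t, edgeP ω s t * ‖f t - f s‖ ^ p) ^ (1 / p)

def poincareConst [Fintype V] (ω : V → V → ℝ) (p : ℝ) (X : Type*) [NormedAddCommGroup X] : ℝ :=
  sInf {π : ℝ | 0 ≤ π ∧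
    ∀ f : V → X, (⨅ x : X, lpNormW ω p fun s => f s - x) ≤ π * gradNormW ω p f}

def markovW [Fintype V] (ω : V → V → ℝ) {X : Type*} [AddCommGroup X] [Module ℝ X]
    (f : V → X) (s : V) : X := (wdeg ω s)⁻¹ • ∑ t, ω s t • f t

/-!
On mean-zero functions the Dirichlet energy is `‖∇f‖² = 2‖f‖² - 2 Re⟨Af, f⟩`, so the best
constant in `‖f‖² ≤ π² ‖∇f‖²` is governed by the top `μ₂` of the Rayleigh quotient of `A` on
mean-zero functions. By homogeneity `μ₂` is the maximum of `Re⟨Af, f⟩` over the compact set of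
mean-zero unit vectors, hence attained at some `f₀`; connectivity makes `‖∇f₀‖² = 2 - 2μ₂`
positive. Since `inf_c ‖f - c‖` is attained at the mean of `f` (Pythagoras), `f - mean f`
gives the upper bound and `f₀` the matching lower bound.
-/

open ComplexConjugate

lemma Complex.norm_sub_sq_eq (z w : ℂ) :
    ‖z - w‖ ^ 2 = ‖z‖ ^ 2 + ‖w‖ ^ 2 - 2 * (z * conj w).re := by
  simp only [← Complex.normSq_eq_norm_sq, Complex.normSq_sub]

lemma ConnW.apply_eq {ω : V → V → ℝ} {α : Type*} (hconn : ConnW ω) {f : V → α}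
    (hf : ∀ s t, 0 < ω s t → f s = f t) (a b : V) : f a = f b := by
  obtain ⟨w⟩ := hconn.preconnected a b
  induction w with
  | nil => rfl
  | cons hadj _ ih =>
    refine Eq.trans ?_ ih
    rcases (SimpleGraph.fromRel_adj _ _ _).mp hadj with ⟨-, hpos | hpos⟩
    · exact hf _ _ hpos
    · exact (hf _ _ hpos).symm

section RayleighQuotient

variable [Fintype V] (ω : V → V → ℝ)

def l2NormSq (f : V → ℂ) : ℝ := ∑ s, nu ω s * ‖f s‖ ^ 2

def markovForm (f : V → ℂ) : ℝ := (∑ s, (nu ω s : ℂ) * markovW ω f s * conj (f s)).re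

def dirichletEnergy (f : V → ℂ) : ℝ := ∑ s, ∑ t, edgeP ω s t * ‖f t - f s‖ ^ 2

def mean (f : V → ℂ) : ℂ := ∑ s, (nu ω s : ℂ) * f s

def rayleighSet : Set ℝ :=
  {r | ∃ f : V → ℂ, f ≠ 0 ∧ mean ω f = 0 ∧ r = markovForm ω f / l2NormSq ω f}

def meanZeroUnitSphere : Set (V → ℂ) := {f | mean ω f = 0 ∧ l2NormSq ω f = 1}

variable {ω}

lemma sum_wdeg_pos [Nonempty V] (hdeg : ∀ s, 0 < wdeg ω s) : 0 < ∑ s, wdeg ω s :=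
  sum_pos (fun s _ => hdeg s) univ_nonempty

lemma nu_pos [Nonempty V] (hdeg : ∀ s, 0 < wdeg ω s) (s : V) : 0 < nu ω s :=
  div_pos (hdeg s) (sum_wdeg_pos hdeg)

lemma sum_nu [Nonempty V] (hdeg : ∀ s, 0 < wdeg ω s) : ∑ s, nu ω s = 1 := by
  simp only [nu, ← sum_div]
  exact div_self (sum_wdeg_pos hdeg).ne'

lemma sum_edgeP_right (s : V) : ∑ t, edgeP ω s t = nu ω s := by
  simp only [edgeP, ← sum_div]
  rfl

lemma sum_edgeP_left (hsym : SymmW ω) (t : V) : ∑ s, edgeP ω s t = nu ω t := by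
  simp only [edgeP, hsym _ t]
  exact sum_edgeP_right t

lemma edgeP_nonneg (hnn : NonnegW ω) (s t : V) : 0 ≤ edgeP ω s t :=
  div_nonneg (hnn s t) (sum_nonneg fun u _ => sum_nonneg fun v _ => hnn u v)

lemma l2NormSq_pos [Nonempty V] (hdeg : ∀ s, 0 < wdeg ω s) {f : V → ℂ} (hf : f ≠ 0) :
    0 < l2NormSq ω f := by
  obtain ⟨s, hs⟩ := Function.ne_iff.mp hf
  exact sum_pos' (fun t _ => mul_nonneg (nu_pos hdeg t).le (by positivity))
    ⟨s, mem_univ s, mul_pos (nu_pos hdeg s) (by positivity)⟩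

lemma markovForm_eq_sum (hdeg : ∀ s, 0 < wdeg ω s) (f : V → ℂ) :
    markovForm ω f = ∑ s, ∑ t, edgeP ω s t * (f t * conj (f s)).re := by
  have hweight : ∀ s t, nu ω s * (wdeg ω s)⁻¹ * ω s t = edgeP ω s t := fun s t => by
    rw [nu, edgeP, div_mul_eq_mul_div, mul_inv_cancel₀ (hdeg s).ne', one_div_mul_eq_div]
    rfl
  simp only [markovForm, markovW, Complex.re_sum, Complex.real_smul, mul_sum, sum_mul]
  refine sum_congr rfl fun s _ => sum_congr rfl fun t _ => ?_
  rw [← hweight, ← Complex.re_ofReal_mul]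
  push_cast
  congr 1
  ring

lemma dirichletEnergy_eq (hsym : SymmW ω) (hdeg : ∀ s, 0 < wdeg ω s) (f : V → ℂ) :
    dirichletEnergy ω f = 2 * l2NormSq ω f - 2 * markovForm ω f := by
  have hexpand : ∀ s t, edgeP ω s t * ‖f t - f s‖ ^ 2 = edgeP ω s t * ‖f t‖ ^ 2
      + edgeP ω s t * ‖f s‖ ^ 2 - 2 * (edgeP ω s t * (f t * conj (f s)).re) := fun s t => by
    rw [Complex.norm_sub_sq_eq]; ring
  have hleft : ∑ s, ∑ t, edgeP ω s t * ‖f t‖ ^ 2 = l2NormSq ω f := by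
    rw [sum_comm]
    simp only [← sum_mul, sum_edgeP_left hsym, l2NormSq]
  have hright : ∑ s, ∑ t, edgeP ω s t * ‖f s‖ ^ 2 = l2NormSq ω f := by
    simp only [← sum_mul, sum_edgeP_right, l2NormSq]
  simp only [dirichletEnergy, hexpand, sum_sub_distrib, sum_add_distrib, ← mul_sum, hleft,
    hright, markovForm_eq_sum hdeg]
  ring

lemma dirichletEnergy_sub_const (f : V → ℂ) (c : ℂ) :
    dirichletEnergy ω (fun s => f s - c) = dirichletEnergy ω f := by
  simp only [dirichletEnergy, sub_sub_sub_cancel_right]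

lemma mean_const [Nonempty V] (hdeg : ∀ s, 0 < wdeg ω s) (c : ℂ) : mean ω (fun _ => c) = c := by
  rw [mean, ← sum_mul, ← Complex.ofReal_sum, sum_nu hdeg, Complex.ofReal_one, one_mul]

lemma mean_sub_mean [Nonempty V] (hdeg : ∀ s, 0 < wdeg ω s) (f : V → ℂ) :
    mean ω (fun s => f s - mean ω f) = 0 := by
  simp only [mean, mul_sub, sum_sub_distrib, ← sum_mul, ← Complex.ofReal_sum, sum_nu hdeg,
    Complex.ofReal_one, one_mul, sub_self]

lemma l2NormSq_sub_const [Nonempty V] (hdeg : ∀ s, 0 < wdeg ω s) {f : V → ℂ}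
    (hf : mean ω f = 0) (c : ℂ) :
    l2NormSq ω (fun s => f s - c) = l2NormSq ω f + ‖c‖ ^ 2 := by
  have hcross : ∑ s, nu ω s * (f s * conj c).re = 0 := by
    simp only [← Complex.re_ofReal_mul, ← Complex.re_sum, ← mul_assoc, ← sum_mul]
    rw [← mean, hf, zero_mul, Complex.zero_re]
  simp only [l2NormSq, Complex.norm_sub_sq_eq, mul_sub, mul_add, sum_sub_distrib,
    sum_add_distrib, ← sum_mul, sum_nu hdeg, mul_left_comm _ (2 : ℝ), ← mul_sum, hcross]
  ring

lemma l2NormSq_smul (c : ℂ) (f : V → ℂ) : l2NormSq ω (c • f) = ‖c‖ ^ 2 * l2NormSq ω f := by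
  simp only [l2NormSq, Pi.smul_apply, smul_eq_mul, norm_mul, mul_pow, mul_sum]
  exact sum_congr rfl fun s _ => by ring

lemma markovForm_smul (hdeg : ∀ s, 0 < wdeg ω s) (c : ℂ) (f : V → ℂ) :
    markovForm ω (c • f) = ‖c‖ ^ 2 * markovForm ω f := by
  have hc : ∀ z w : ℂ, (c * z * conj (c * w)).re = ‖c‖ ^ 2 * (z * conj w).re := fun z w => by
    rw [map_mul, mul_mul_mul_comm, Complex.mul_conj', ← Complex.ofReal_pow,
      Complex.re_ofReal_mul]
  simp only [markovForm_eq_sum hdeg, Pi.smul_apply, smul_eq_mul, hc, mul_sum]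
  exact sum_congr rfl fun s _ => sum_congr rfl fun t _ => by ring

lemma mean_smul (c : ℂ) (f : V → ℂ) : mean ω (c • f) = c * mean ω f := by
  simp only [mean, Pi.smul_apply, smul_eq_mul, mul_sum]
  exact sum_congr rfl fun s _ => by ring

lemma dirichletEnergy_pos [Nonempty V] (hnn : NonnegW ω) (hconn : ConnW ω)
    (hdeg : ∀ s, 0 < wdeg ω s) {f : V → ℂ} (hf : f ≠ 0) (hmean : mean ω f = 0) :
    0 < dirichletEnergy ω f := by
  obtain ⟨s, t, hst, hne⟩ : ∃ s t, 0 < ω s t ∧ f s ≠ f t := by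
    by_contra! hconst
    obtain ⟨a⟩ := ‹Nonempty V›
    have hfa : f = fun _ => f a := funext fun s => hconn.apply_eq hconst s a
    rw [hfa, mean_const hdeg] at hmean
    exact hf (hfa.trans (funext fun _ => hmean))
  have hterm_nonneg : ∀ u v, 0 ≤ edgeP ω u v * ‖f v - f u‖ ^ 2 := fun u v =>
    mul_nonneg (edgeP_nonneg hnn u v) (by positivity)
  have hterm_pos : 0 < edgeP ω s t * ‖f t - f s‖ ^ 2 :=
    mul_pos (div_pos hst (sum_wdeg_pos hdeg))
      (pow_pos (norm_pos_iff.mpr (sub_ne_zero.mpr hne.symm)) 2)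
  exact sum_pos' (fun u _ => sum_nonneg fun v _ => hterm_nonneg u v)
    ⟨s, mem_univ s, sum_pos' (fun v _ => hterm_nonneg s v) ⟨t, mem_univ t, hterm_pos⟩⟩

lemma ne_zero_of_mem_meanZeroUnitSphere {f : V → ℂ} (hf : f ∈ meanZeroUnitSphere ω) :
    f ≠ 0 := by
  rintro rfl
  simpa [l2NormSq] using hf.2

lemma exists_ne_zero_mean_eq_zero [Nonempty V] (hdeg : ∀ s, 0 < wdeg ω s)
    (hV : 1 < Fintype.card V) : ∃ f : V → ℂ, f ≠ 0 ∧ mean ω f = 0 := by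
  classical
  obtain ⟨a, b, hab⟩ := Fintype.exists_pair_of_one_lt_card hV
  let g : V → ℂ := Pi.single a 1
  refine ⟨fun s => g s - mean ω g, fun h => ?_, mean_sub_mean hdeg g⟩
  have ha := congrFun h a
  have hb := congrFun h b
  simp only [g, Pi.single_eq_same, Pi.single_eq_of_ne hab.symm, Pi.zero_apply] at ha hb
  rw [zero_sub, neg_eq_zero] at hb
  simp [hb] at ha

lemma rayleighSet_eq_image [Nonempty V] (hdeg : ∀ s, 0 < wdeg ω s) :
    rayleighSet ω = markovForm ω '' meanZeroUnitSphere ω := by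
  ext r
  constructor
  · rintro ⟨f, hf, hmean, rfl⟩
    have hN := l2NormSq_pos hdeg hf
    let c : ℂ := ((√(l2NormSq ω f))⁻¹ : ℝ)
    have hc : ‖c‖ ^ 2 = (l2NormSq ω f)⁻¹ := by
      rw [Complex.norm_real, Real.norm_eq_abs, sq_abs, inv_pow, Real.sq_sqrt hN.le]
    refine ⟨c • f, ⟨?_, ?_⟩, ?_⟩
    · rw [mean_smul, hmean, mul_zero]
    · rw [l2NormSq_smul, hc, inv_mul_cancel₀ hN.ne']
    · rw [markovForm_smul hdeg, hc, inv_mul_eq_div]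
  · rintro ⟨f, hf, rfl⟩
    exact ⟨f, ne_zero_of_mem_meanZeroUnitSphere hf, hf.1, by rw [hf.2, div_one]⟩

lemma isCompact_meanZeroUnitSphere [Nonempty V] (hdeg : ∀ s, 0 < wdeg ω s) :
    IsCompact (meanZeroUnitSphere ω) := by
  have hclosed : IsClosed (meanZeroUnitSphere ω) :=
    (isClosed_eq (by unfold mean; fun_prop) continuous_const).inter
      (isClosed_eq (by unfold l2NormSq; fun_prop) continuous_const)
  refine (isCompact_univ_pi fun s => isCompact_closedBall (0 : ℂ) √(nu ω s)⁻¹).of_isClosed_subset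
    hclosed ?_
  rintro f ⟨-, hf⟩ s -
  have hs : nu ω s * ‖f s‖ ^ 2 ≤ 1 :=
    hf ▸ single_le_sum (f := fun t => nu ω t * ‖f t‖ ^ 2)
      (fun t _ => mul_nonneg (nu_pos hdeg t).le (by positivity)) (mem_univ s)
  rw [Metric.mem_closedBall, dist_zero_right,
    Real.le_sqrt (norm_nonneg _) (inv_nonneg.mpr (nu_pos hdeg s).le), ← one_div,
    le_div_iff₀' (nu_pos hdeg s)]
  exact hs

variable (ω) in
lemma continuous_markovForm : Continuous (markovForm ω) := by
  unfold markovForm markovW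
  fun_prop

lemma exists_isGreatest_rayleighSet [Nonempty V] (hdeg : ∀ s, 0 < wdeg ω s)
    (hV : 1 < Fintype.card V) :
    ∃ f₀ ∈ meanZeroUnitSphere ω, IsGreatest (rayleighSet ω) (markovForm ω f₀) := by
  obtain ⟨f, hf, hmean⟩ := exists_ne_zero_mean_eq_zero hdeg hV
  have hne : (markovForm ω '' meanZeroUnitSphere ω).Nonempty := by
    rw [← rayleighSet_eq_image hdeg]
    exact ⟨_, f, hf, hmean, rfl⟩
  obtain ⟨f₀, hf₀, hmax⟩ := (isCompact_meanZeroUnitSphere hdeg).exists_isMaxOn hne.of_image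
    (continuous_markovForm ω).continuousOn
  rw [rayleighSet_eq_image hdeg]
  refine ⟨f₀, hf₀, Set.mem_image_of_mem _ hf₀, ?_⟩
  rintro _ ⟨g, hg, rfl⟩
  exact isMaxOn_iff.mp hmax g hg

lemma markovForm_le_of_isGreatest [Nonempty V] (hdeg : ∀ s, 0 < wdeg ω s) {μ : ℝ}
    (hμ : IsGreatest (rayleighSet ω) μ) {g : V → ℂ} (hg : mean ω g = 0) :
    markovForm ω g ≤ μ * l2NormSq ω g := by
  rcases eq_or_ne g 0 with rfl | hg0
  · simp [markovForm, l2NormSq]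
  · exact (div_le_iff₀ (l2NormSq_pos hdeg hg0)).mp (hμ.2 ⟨g, hg0, hg, rfl⟩)

lemma lpNormW_two_eq_sqrt (f : V → ℂ) : lpNormW ω 2 f = √(l2NormSq ω f) := by
  simp only [lpNormW, l2NormSq, Real.rpow_two, Real.sqrt_eq_rpow]

lemma gradNormW_two_eq_sqrt (f : V → ℂ) : gradNormW ω 2 f = √(dirichletEnergy ω f) := by
  simp only [gradNormW, dirichletEnergy, Real.rpow_two, Real.sqrt_eq_rpow]

lemma iInf_lpNormW_two_le [Nonempty V] (hsym : SymmW ω) (hdeg : ∀ s, 0 < wdeg ω s) {μ : ℝ}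
    (hμ : μ < 1) (hform : ∀ g, mean ω g = 0 → markovForm ω g ≤ μ * l2NormSq ω g)
    (f : V → ℂ) :
    (⨅ c : ℂ, lpNormW ω 2 fun s => f s - c) ≤ 1 / √(2 - 2 * μ) * gradNormW ω 2 f := by
  let g := fun s => f s - mean ω f
  have hbdd : BddBelow (Set.range fun c : ℂ => lpNormW ω 2 fun s => f s - c) :=
    ⟨0, Set.forall_mem_range.2 fun c => by rw [lpNormW_two_eq_sqrt]; exact Real.sqrt_nonneg _⟩
  have hg : (2 - 2 * μ) * l2NormSq ω g ≤ dirichletEnergy ω f := by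
    rw [← dirichletEnergy_sub_const f (mean ω f), dirichletEnergy_eq hsym hdeg]
    linarith [hform g (mean_sub_mean hdeg f)]
  calc (⨅ c : ℂ, lpNormW ω 2 fun s => f s - c)
      ≤ lpNormW ω 2 g := ciInf_le hbdd _
    _ = √(l2NormSq ω g) := lpNormW_two_eq_sqrt g
    _ ≤ √(dirichletEnergy ω f / (2 - 2 * μ)) :=
      Real.sqrt_le_sqrt ((le_div_iff₀' (by linarith)).2 hg)
    _ = 1 / √(2 - 2 * μ) * gradNormW ω 2 f := by
      rw [gradNormW_two_eq_sqrt, Real.sqrt_div' _ (by linarith)]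
      ring

lemma one_div_sqrt_dirichletEnergy_le [Nonempty V] (hdeg : ∀ s, 0 < wdeg ω s) {f : V → ℂ}
    (hf : f ∈ meanZeroUnitSphere ω) (hE : 0 < dirichletEnergy ω f) {b : ℝ}
    (hb : (⨅ c : ℂ, lpNormW ω 2 fun s => f s - c) ≤ b * gradNormW ω 2 f) :
    1 / √(dirichletEnergy ω f) ≤ b := by
  have hinf : 1 ≤ ⨅ c : ℂ, lpNormW ω 2 fun s => f s - c := le_ciInf fun c => by
    rw [lpNormW_two_eq_sqrt, l2NormSq_sub_const hdeg hf.1, hf.2, Real.one_le_sqrt]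
    linarith [sq_nonneg ‖c‖]
  rw [gradNormW_two_eq_sqrt] at hb
  rw [div_le_iff₀ (Real.sqrt_pos.mpr hE)]
  exact hinf.trans hb

end RayleighQuotient

/-- For a connected finite weighted graph with at least two vertices and positive
degrees, the quantity `μ₂ = sup { Re⟨Af,f⟩_ν/⟨f,f⟩_ν : f ≠ 0, mean zero }` satisfies `μ₂ < 1`
and `π_{2,𝒢}(ℂ) = 1/√(2 - 2μ₂)`. -/
theorem stmt2 {V : Type*} [Fintype V] (hV : 1 < Fintype.card V)
    (ω : V → V → ℝ) (hsym : SymmW ω) (hnn : NonnegW ω) (hconn : ConnW ω)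
    (hdeg : ∀ s, 0 < wdeg ω s)
    (μ₂ : ℝ)
    (hμ₂ : μ₂ = sSup {r : ℝ | ∃ f : V → ℂ, f ≠ 0 ∧ (∑ s, (nu ω s : ℂ) * f s) = 0 ∧
      r = (∑ s, (nu ω s : ℂ) * markovW ω f s * (starRingEnd ℂ) (f s)).re /
            ∑ s, nu ω s * ‖f s‖ ^ 2}) :
    μ₂ < 1 ∧ poincareConst ω 2 ℂ = 1 / Real.sqrt (2 - 2 * μ₂) := by
  have : Nonempty V := Fintype.card_pos_iff.mp (by omega)
  obtain ⟨f₀, hf₀, hgreatest⟩ := exists_isGreatest_rayleighSet hdeg hV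
  have hμ₂_eq : μ₂ = markovForm ω f₀ := hμ₂.trans hgreatest.csSup_eq
  have hE : dirichletEnergy ω f₀ = 2 - 2 * μ₂ := by
    rw [dirichletEnergy_eq hsym hdeg, hf₀.2, hμ₂_eq]
    ring
  have hEpos := dirichletEnergy_pos hnn hconn hdeg (ne_zero_of_mem_meanZeroUnitSphere hf₀) hf₀.1
  have hμ₂_lt : μ₂ < 1 := by linarith
  refine ⟨hμ₂_lt, IsLeast.csInf_eq ⟨⟨by positivity, iInf_lpNormW_two_le hsym hdeg hμ₂_lt
    fun g => markovForm_le_of_isGreatest hdeg (hμ₂_eq ▸ hgreatest)⟩, fun b hb => ?_⟩⟩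
  rw [← hE]
  exact one_div_sqrt_dirichletEnergy_le hdeg hf₀ hEpos (hb.2 f₀)
end
end

section
/- Let 1 < p < ∞ and C > 0, let X be a complex Banach space satisfying the p-uniform convexity inequality with constant C, and let 𝒢 = (V, ω) be a finite weighted graph with all degrees positive. Then for every f : V → X: ∑_s ν(s) ‖f(s) − (Af)(s)‖^p ≤ ∑_{s,t} ℙ(s,t) ‖f(s) − f(t)‖^p − C · ∑_{s,t} ℙ(s,t) ‖f(t) − (Af)(s)‖^p. -/
open scoped BigOperators
open Finset MeasureTheory

noncomputable section

variable {V : Type*}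

/-- `X` satisfies the p-uniform convexity inequality with constant `C`. -/
def PUC (X : Type*) [NormedAddCommGroup X] [Module ℝ X] (p C : ℝ) : Prop :=
  ∀ (n : ℕ) (μ : Fin n → ℝ), (∀ i, 0 ≤ μ i) → (∑ i, μ i) = 1 →
    ∀ U : Fin n → X,
      ‖∑ i, μ i • U i‖ ^ p + C * ∑ i, μ i * ‖U i - ∑ j, μ j • U j‖ ^ p ≤ ∑ i, μ i * ‖U i‖ ^ p

/-!
At a vertex `s`, apply uniform convexity to `U t = f s - f t` under the transition law
`t ↦ ω s t / d s`: its mean is `f s - A f s`, and `U t - 𝔼 U = A f s - f t`. Averaging over `s`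
against `ν` turns the weights `ν s · ω s t / d s` into `ℙ (s, t)`.
-/

section UniformConvexity

variable {X : Type*} [NormedAddCommGroup X] [Module ℝ X] {p C : ℝ}

theorem PUC.ineq_of_fintype (hX : PUC X p C) {ι : Type*} [Fintype ι] (μ : ι → ℝ)
    (hμ : ∀ i, 0 ≤ μ i) (hsum : ∑ i, μ i = 1) (U : ι → X) :
    ‖∑ i, μ i • U i‖ ^ p + C * ∑ i, μ i * ‖U i - ∑ j, μ j • U j‖ ^ p ≤
      ∑ i, μ i * ‖U i‖ ^ p := by
  let e := (Fintype.equivFin ι).symm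
  have h := hX _ (μ ∘ e) (fun i => hμ _) (hsum ▸ e.sum_comp μ) (U ∘ e)
  simp only [Function.comp_apply] at h
  rwa [e.sum_comp (fun j => μ j • U j), e.sum_comp (fun i => μ i * ‖U i - _‖ ^ p),
    e.sum_comp (fun i => μ i * ‖U i‖ ^ p)] at h

theorem PUC.norm_sub_sum_smul_pow_add_le (hX : PUC X p C) {ι : Type*} [Fintype ι]
    (μ : ι → ℝ) (hμ : ∀ i, 0 ≤ μ i) (hsum : ∑ i, μ i = 1) (x : X) (U : ι → X) :
    ‖x - ∑ i, μ i • U i‖ ^ p + C * ∑ i, μ i * ‖U i - ∑ j, μ j • U j‖ ^ p ≤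
      ∑ i, μ i * ‖x - U i‖ ^ p := by
  have hmean : ∑ i, μ i • (x - U i) = x - ∑ i, μ i • U i := by
    simp only [smul_sub, sum_sub_distrib, ← sum_smul, hsum, one_smul]
  have hdev : ∀ i, (x - U i) - (x - ∑ j, μ j • U j) = -(U i - ∑ j, μ j • U j) := fun i => by
    abel
  simpa only [hmean, hdev, norm_neg] using hX.ineq_of_fintype μ hμ hsum fun i => x - U i

end UniformConvexity

section WeightedGraph

variable [Fintype V] {ω : V → V → ℝ}

theorem markovW_eq_sum {X : Type*} [AddCommGroup X] [Module ℝ X] (f : V → X) (s : V) :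
    markovW ω f s = ∑ t, (ω s t / wdeg ω s) • f t := by
  simp only [markovW, smul_sum, smul_smul, div_eq_inv_mul]

theorem sum_div_wdeg {s : V} (hs : wdeg ω s ≠ 0) : ∑ t, ω s t / wdeg ω s = 1 := by
  rw [← sum_div]
  exact div_self hs

theorem nu_mul_div_wdeg {s : V} (hs : wdeg ω s ≠ 0) (t : V) :
    nu ω s * (ω s t / wdeg ω s) = edgeP ω s t := by
  rw [nu, edgeP]
  field_simp
  rfl

theorem nu_nonneg (hdeg : ∀ s, 0 ≤ wdeg ω s) (s : V) : 0 ≤ nu ω s :=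
  div_nonneg (hdeg s) (sum_nonneg fun t _ => hdeg t)

variable {X : Type*} [NormedAddCommGroup X] [Module ℝ X] {p C : ℝ}

theorem PUC.norm_sub_markovW_pow_add_le (hX : PUC X p C) (hnn : NonnegW ω) {s : V}
    (hs : 0 < wdeg ω s) (f : V → X) :
    ‖f s - markovW ω f s‖ ^ p + C * ∑ t, ω s t / wdeg ω s * ‖f t - markovW ω f s‖ ^ p ≤
      ∑ t, ω s t / wdeg ω s * ‖f s - f t‖ ^ p := by
  rw [markovW_eq_sum]
  exact hX.norm_sub_sum_smul_pow_add_le _ (fun t => div_nonneg (hnn s t) hs.le)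
    (sum_div_wdeg hs.ne') (f s) f

theorem PUC.nu_mul_norm_sub_markovW_pow_le (hX : PUC X p C) (hnn : NonnegW ω)
    (hdeg : ∀ s, 0 < wdeg ω s) (f : V → X) (s : V) :
    nu ω s * ‖f s - markovW ω f s‖ ^ p ≤
      ∑ t, edgeP ω s t * ‖f s - f t‖ ^ p
        - C * ∑ t, edgeP ω s t * ‖f t - markovW ω f s‖ ^ p := by
  have h := mul_le_mul_of_nonneg_left (hX.norm_sub_markovW_pow_add_le hnn (hdeg s) f)
    (nu_nonneg (fun s => (hdeg s).le) s)
  rw [mul_add, mul_left_comm] at h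
  simp only [mul_sum, ← mul_assoc, nu_mul_div_wdeg (hdeg s).ne'] at h ⊢
  linarith

end WeightedGraph

theorem stmt4_general (p C : ℝ)
    (X : Type*) [NormedAddCommGroup X] [NormedSpace ℂ X]
    (hX : PUC X p C)
    {V : Type*} [Fintype V]
    (ω : V → V → ℝ) (hnn : NonnegW ω)
    (hdeg : ∀ s, 0 < wdeg ω s)
    (f : V → X) :
    ∑ s, nu ω s * ‖f s - markovW ω f s‖ ^ p ≤
      (∑ s, ∑ t, edgeP ω s t * ‖f s - f t‖ ^ p)
        - C * ∑ s, ∑ t, edgeP ω s t * ‖f t - markovW ω f s‖ ^ p := by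
  rw [mul_sum, ← sum_sub_distrib]
  exact sum_le_sum fun s _ => hX.nu_mul_norm_sub_markovW_pow_le hnn hdeg f s

/-- for a `p`-uniformly convex space `X` (constant `C`) and any finite weighted
graph with positive degrees,
`𝔼‖f(Z₀) − Af(Z₀)‖^p ≤ 𝔼‖f(Z₀) − f(Z₁)‖^p − C·𝔼‖f(Z₁) − Af(Z₀)‖^p`. -/
theorem stmt4 (p C : ℝ) (hp : 1 < p) (hC : 0 < C)
    (X : Type*) [NormedAddCommGroup X] [NormedSpace ℂ X] [CompleteSpace X]
    (hX : PUC X p C)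
    {V : Type*} [Fintype V]
    (ω : V → V → ℝ) (hsym : SymmW ω) (hnn : NonnegW ω)
    (hdeg : ∀ s, 0 < wdeg ω s)
    (f : V → X) :
    ∑ s, nu ω s * ‖f s - markovW ω f s‖ ^ p ≤
      (∑ s, ∑ t, edgeP ω s t * ‖f s - f t‖ ^ p)
        - C * ∑ s, ∑ t, edgeP ω s t * ‖f t - markovW ω f s‖ ^ p :=
  stmt4_general p C X hX ω hnn hdeg f
end
end
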